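/- Let f : ℝ → ℝ be continuously differentiable with f(t) > 0 and f'(t) ≥ 0 for all t ≥ 0, and such that f(t)/t^{p-1} → +∞ as t → +∞. Then there exists a constant C depending only on n, p and f such that: every radially decreasing W^{1,p} solution u of -Δ_p u = f(u) on the punctured unit ball (in radial coordinates) with u(r) > 0 for r ∈ (0,1) and u(1) = 0 satisfies ∫_0^1 r^{n-1} ( u(r)^{p-1} + f(u(r)) ) dr ≤ C. -/

import Mathlib

open MeasureTheory Set Real Filter

/-- The radial `W^{1,p}` norm of a radial function `u` with radial derivative `u'`
on the unit ball of `ℝ^n`, written in radial coordinates. -/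
noncomputable def radialNorm (n : ℕ) (p : ℝ) (u u' : ℝ → ℝ) : ℝ :=
  (∫ r in Ioc (0:ℝ) 1, r ^ ((n : ℝ) - 1) * (|u r| ^ p + |u' r| ^ p)) ^ (1 / p)

/-- `u : (0,1] → ℝ` (with radial derivative `u'`) is a radially decreasing `W^{1,p}`
solution of `-Δ_p u = g(u)` on the punctured unit ball, in radial coordinates:
`u` is `C^1` on `(0,1]` with derivative `u'`, `u' < 0` on `(0,1)`,
`r ↦ r^{n-1}|u'|^{p-2}u'` has derivative `-r^{n-1} g(u(r))` on `(0,1)`, and the radial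
`W^{1,p}` norm of `u` is finite. -/
def IsRadialSolution (n : ℕ) (p : ℝ) (g : ℝ → ℝ) (u u' : ℝ → ℝ) : Prop :=
  (∀ r ∈ Ioc (0:ℝ) 1, HasDerivWithinAt u (u' r) (Ioc (0:ℝ) 1) r) ∧
  ContinuousOn u' (Ioc (0:ℝ) 1) ∧
  (∀ r ∈ Ioo (0:ℝ) 1, u' r < 0) ∧
  (∀ r ∈ Ioo (0:ℝ) 1,
    HasDerivAt (fun s : ℝ => s ^ ((n : ℝ) - 1) * |u' s| ^ (p - 2) * u' s)
      (-(r ^ ((n : ℝ) - 1) * g (u r))) r) ∧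
  IntegrableOn (fun r : ℝ => r ^ ((n : ℝ) - 1) * (|u r| ^ p + |u' r| ^ p)) (Ioc (0:ℝ) 1)

/-- Semi-stability of a radial solution: the second variation of energy is nonnegative
for every `C^1` test function with compact support in `(0,1)`. -/
def IsSemiStable (n : ℕ) (p : ℝ) (g : ℝ → ℝ) (u u' : ℝ → ℝ) : Prop :=
  ∀ ξ : ℝ → ℝ, ContDiff ℝ 1 ξ → IsCompact (tsupport ξ) → tsupport ξ ⊆ Ioo (0:ℝ) 1 →
    0 ≤ ∫ r in Ioc (0:ℝ) 1,
        r ^ ((n : ℝ) - 1) *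
          ((p - 1) * |u' r| ^ (p - 2) * (deriv ξ r) ^ 2 - deriv g (u r) * (ξ r) ^ 2)


/-!
Everything is controlled by the flux `Φ = -r^{n-1}|u'|^{p-2}u'` at `r = 1`. Integrating the
equation gives `∫_a^1 r^{n-1} f(u) ≤ Φ`. With `q = u(1-δ)`, monotonicity of `u` and `f` bounds this
integral over `[1/2, 1-δ]` below by a multiple of `f(q)`, while the mean value theorem on
`[1-δ, 1]` gives `Φ ≤ δ f(q) + (q/δ)^{p-1}`. For `8δ = 2^{1-n}` these give
`f(q) ≲ q^{p-1}`, so superlinearity bounds `q`, hence `Φ`, independently of `u`. Finally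
`u^{p-1} ≤ f(u) + T`, so the integral is at most `2Φ + T`.
-/

open Topology

theorem continuous_abs_rpow_mul {a : ℝ} (ha : -1 < a) : Continuous fun x : ℝ => |x| ^ a * x := by
  refine continuous_iff_continuousAt.2 fun x => ?_
  rcases eq_or_ne x 0 with rfl | hx
  · have hnorm : (fun y : ℝ => ‖|y| ^ a * y‖) = fun y => |y| ^ (a + 1) := by
      ext y
      rcases eq_or_ne y 0 with rfl | hy
      · simp [zero_rpow (by linarith : a + 1 ≠ 0)]
      · rw [norm_mul, norm_of_nonneg (by positivity), norm_eq_abs,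
          rpow_add_one (abs_ne_zero.2 hy)]
    have hlim : Tendsto (fun y : ℝ => |y| ^ (a + 1)) (𝓝 0) (𝓝 0) := by
      simpa [zero_rpow (by linarith : a + 1 ≠ 0)] using
        (continuous_abs.rpow_const fun _ => Or.inr (by linarith : 0 ≤ a + 1)).tendsto 0
    rw [ContinuousAt, mul_zero, tendsto_zero_iff_norm_tendsto_zero, hnorm]
    exact hlim
  · exact ((continuousAt_rpow_const _ _ (Or.inl (abs_ne_zero.2 hx))).comp
      continuous_abs.continuousAt).mul continuousAt_id

theorem exists_mul_rpow_le_add_of_tendsto_div_rpow_atTop {f : ℝ → ℝ} {a : ℝ} (ha : 0 ≤ a)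
    (hf : ∀ t, 0 ≤ t → 0 ≤ f t) (hsuper : Tendsto (fun t => f t / t ^ a) atTop atTop) (K : ℝ) :
    ∃ T, 0 ≤ T ∧ ∀ t, 0 ≤ t → K * t ^ a ≤ f t + T := by
  obtain ⟨S, hS⟩ := eventually_atTop.1 ((hsuper.eventually_ge_atTop K).and (eventually_gt_atTop 0))
  refine ⟨|K| * max S 0 ^ a, by positivity, fun t ht => ?_⟩
  rcases le_or_gt S t with hSt | htS
  · obtain ⟨hK, htpos⟩ := hS t hSt
    have := (le_div_iff₀ (rpow_pos_of_pos htpos a)).1 hK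
    have : 0 ≤ |K| * max S 0 ^ a := by positivity
    linarith
  · calc K * t ^ a ≤ |K| * max S 0 ^ a :=
          (mul_le_mul_of_nonneg_right (le_abs_self K) (by positivity)).trans
            (mul_le_mul_of_nonneg_left (rpow_le_rpow ht (htS.le.trans (le_max_left _ _)) ha)
              (abs_nonneg K))
      _ ≤ f t + |K| * max S 0 ^ a := le_add_of_nonneg_left (hf t ht)

theorem integrableOn_Ioc_and_setIntegral_le_of_forall_intervalIntegral_le {h : ℝ → ℝ}
    {a b C : ℝ} (hab : a < b) (hcont : ContinuousOn h (Ioc a b))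
    (hnonneg : ∀ x ∈ Ioc a b, 0 ≤ h x) (hbound : ∀ c ∈ Ioo a b, ∫ x in c..b, h x ≤ C) :
    IntegrableOn h (Ioc a b) ∧ ∫ x in Ioc a b, h x ≤ C := by
  set c : ℕ → ℝ := fun i => a + (b - a) / (i + 2)
  have hc_mem : ∀ i, c i ∈ Ioo a b := fun i => by
    have hi : (1 : ℝ) < i + 2 := by linarith [i.cast_nonneg (α := ℝ)]
    have hpos := div_pos (sub_pos.2 hab) (one_pos.trans hi)
    have hlt := div_lt_self (sub_pos.2 hab) hi
    refine ⟨?_, ?_⟩ <;> simp only [c] <;> linarith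
  have hc_lim : Tendsto c atTop (𝓝 a) := by
    have h0 : Tendsto (fun i : ℕ => (b - a) / ((i : ℝ) + 2)) atTop (𝓝 0) :=
      tendsto_const_nhds.div_atTop (tendsto_natCast_atTop_atTop.atTop_add tendsto_const_nhds)
    simpa using (tendsto_const_nhds (x := a)).add h0
  have hIcc : ∀ i, Icc (c i) b ⊆ Ioc a b := fun i =>
    Icc_subset_Ioc_iff (hc_mem i).2.le |>.2 ⟨(hc_mem i).1, le_rfl⟩
  have hint : IntegrableOn h (Ioc a b) := by
    refine integrableOn_Ioc_of_intervalIntegral_norm_bounded_left (I := C)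
      (fun i => ((hcont.mono (hIcc i)).integrableOn_Icc).mono_set Ioc_subset_Icc_self) hc_lim
      (Eventually.of_forall fun i => ?_)
    rw [setIntegral_congr_fun measurableSet_Ioc fun x hx =>
      norm_of_nonneg (hnonneg x (Ioc_subset_Ioc_left (hc_mem i).1.le hx)),
      ← intervalIntegral.integral_of_le (hc_mem i).2.le]
    exact hbound _ (hc_mem i)
  refine ⟨hint, ?_⟩
  have hprim := intervalIntegral.continuousOn_primitive_interval_left (μ := volume) (f := h)
    (a := a) (b := b) (by rwa [uIcc_of_le hab.le, integrableOn_Icc_iff_integrableOn_Ioc])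
  rw [uIcc_of_le hab.le] at hprim
  have hlim : Tendsto (fun i => ∫ x in c i..b, h x) atTop (𝓝 (∫ x in a..b, h x)) :=
    (hprim a (left_mem_Icc.2 hab.le)).tendsto.comp (tendsto_nhdsWithin_iff.2
      ⟨hc_lim, Eventually.of_forall fun i => Ioo_subset_Icc_self (hc_mem i)⟩)
  rw [← intervalIntegral.integral_of_le hab.le]
  exact le_of_tendsto hlim (Eventually.of_forall fun i => hbound _ (hc_mem i))

noncomputable def radialFlux (n : ℕ) (p : ℝ) (u' : ℝ → ℝ) (s : ℝ) : ℝ :=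
  s ^ ((n : ℝ) - 1) * |u' s| ^ (p - 2) * u' s

theorem neg_radialFlux_of_neg {n : ℕ} {p : ℝ} {u' : ℝ → ℝ} {s : ℝ} (hs : u' s < 0) :
    -radialFlux n p u' s = s ^ ((n : ℝ) - 1) * (-u' s) ^ (p - 1) := by
  have hpos : 0 < -u' s := neg_pos.2 hs
  rw [radialFlux, abs_of_neg hs, show p - 1 = (p - 2) + 1 by ring, rpow_add_one hpos.ne']
  ring

namespace IsRadialSolution

variable {n : ℕ} {p : ℝ} {f u u' : ℝ → ℝ}

theorem continuousOn (hu : IsRadialSolution n p f u u') : ContinuousOn u (Ioc 0 1) :=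
  fun r hr => (hu.1 r hr).continuousWithinAt

theorem hasDerivAt (hu : IsRadialSolution n p f u u') {r : ℝ} (hr : r ∈ Ioo 0 1) :
    HasDerivAt u (u' r) r :=
  (hu.1 r (Ioo_subset_Ioc_self hr)).hasDerivAt (Ioc_mem_nhds hr.1 hr.2)

theorem antitoneOn (hu : IsRadialSolution n p f u u') : AntitoneOn u (Ioc 0 1) :=
  antitoneOn_of_hasDerivWithinAt_nonpos (convex_Ioc 0 1) hu.continuousOn
    (fun r hr => by
      rw [interior_Ioc] at hr
      exact (hu.hasDerivAt hr).hasDerivWithinAt)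
    (fun r hr => by
      rw [interior_Ioc] at hr
      exact (hu.2.2.1 r hr).le)

theorem nonneg_of_nonneg_one (hu : IsRadialSolution n p f u u') (hu1 : 0 ≤ u 1) {r : ℝ}
    (hr : r ∈ Ioc 0 1) : 0 ≤ u r :=
  hu1.trans (hu.antitoneOn hr (right_mem_Ioc.2 one_pos) hr.2)

theorem continuousOn_radialFlux (hu : IsRadialSolution n p f u u') (hp : 1 < p) :
    ContinuousOn (radialFlux n p u') (Ioc 0 1) := by
  have hweight : ContinuousOn (fun s : ℝ => s ^ ((n : ℝ) - 1)) (Ioc 0 1) :=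
    continuousOn_id.rpow_const fun _ hs => Or.inl hs.1.ne'
  have hpow := (continuous_abs_rpow_mul (a := p - 2) (by linarith)).comp_continuousOn hu.2.1
  exact (hweight.mul hpow).congr fun s _ => by
    simp only [radialFlux, Pi.mul_apply, Function.comp_apply, mul_assoc]

theorem continuousOn_weight_mul_comp (hu : IsRadialSolution n p f u u') {F : ℝ → ℝ}
    (hF : Continuous F) : ContinuousOn (fun t : ℝ => t ^ ((n : ℝ) - 1) * F (u t)) (Ioc 0 1) :=
  (continuousOn_id.rpow_const fun _ hs => Or.inl hs.1.ne').mul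
    (hF.comp_continuousOn hu.continuousOn)

theorem intervalIntegral_eq_radialFlux_sub (hu : IsRadialSolution n p f u u') (hp : 1 < p)
    (hf : Continuous f) {a b : ℝ} (ha : 0 < a) (hab : a ≤ b) (hb : b ≤ 1) :
    ∫ t in a..b, t ^ ((n : ℝ) - 1) * f (u t) = radialFlux n p u' a - radialFlux n p u' b := by
  have hsub : Icc a b ⊆ Ioc 0 1 := Icc_subset_Ioc_iff hab |>.2 ⟨ha, hb⟩
  have hftc := intervalIntegral.integral_eq_sub_of_hasDerivAt_of_le hab
    ((hu.continuousOn_radialFlux hp).mono hsub)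
    (fun x hx => hu.2.2.2.1 x ⟨ha.trans hx.1, hx.2.trans_le hb⟩)
    (((hu.continuousOn_weight_mul_comp hf).mono hsub).intervalIntegrable_of_Icc hab).neg
  rw [intervalIntegral.integral_neg] at hftc
  linarith

theorem intervalIntegral_le_neg_radialFlux_one (hu : IsRadialSolution n p f u u') (hp : 1 < p)
    (hf : Continuous f) {a : ℝ} (ha : a ∈ Ioo 0 1) :
    ∫ t in a..1, t ^ ((n : ℝ) - 1) * f (u t) ≤ -radialFlux n p u' 1 := by
  have hflux : radialFlux n p u' a ≤ 0 :=
    mul_nonpos_of_nonneg_of_nonpos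
      (mul_nonneg (rpow_nonneg ha.1.le _) (rpow_nonneg (abs_nonneg _) _)) (hu.2.2.1 a ha).le
  rw [hu.intervalIntegral_eq_radialFlux_sub hp hf ha.1 ha.2.le le_rfl]
  linarith

section Estimates

variable (hn : 1 ≤ n) (hp : 1 < p) (hf : Continuous f) (hfmono : MonotoneOn f (Ici 0))
  (hf0 : ∀ t, 0 ≤ t → 0 ≤ f t) (hu1 : 0 ≤ u 1)
include hn hp hf hfmono hf0 hu1

theorem mul_le_neg_radialFlux_one (hu : IsRadialSolution n p f u u') {a ρ : ℝ} (ha : 0 < a)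
    (haρ : a ≤ ρ) (hρ : ρ < 1) :
    (ρ - a) * (a ^ ((n : ℝ) - 1) * f (u ρ)) ≤ -radialFlux n p u' 1 := by
  have hexp : (0 : ℝ) ≤ n - 1 := sub_nonneg.2 (by exact_mod_cast hn)
  have hg := hu.continuousOn_weight_mul_comp hf
  have hρ' : ρ ∈ Ioc 0 1 := ⟨ha.trans_le haρ, hρ.le⟩
  calc (ρ - a) * (a ^ ((n : ℝ) - 1) * f (u ρ))
      = ∫ _ in a..ρ, a ^ ((n : ℝ) - 1) * f (u ρ) := by
        rw [intervalIntegral.integral_const, smul_eq_mul]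
    _ ≤ ∫ t in a..ρ, t ^ ((n : ℝ) - 1) * f (u t) := by
        refine intervalIntegral.integral_mono_on haρ intervalIntegrable_const
          ((hg.mono (Icc_subset_Ioc_iff haρ |>.2 ⟨ha, hρ.le⟩)).intervalIntegrable_of_Icc haρ)
          fun t ht => ?_
        have ht' : t ∈ Ioc 0 1 := ⟨ha.trans_le ht.1, ht.2.trans hρ.le⟩
        exact mul_le_mul (rpow_le_rpow ha.le ht.1 hexp)
          (hfmono (hu.nonneg_of_nonneg_one hu1 hρ') (hu.nonneg_of_nonneg_one hu1 ht')
            (hu.antitoneOn ht' hρ' ht.2))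
          (hf0 _ (hu.nonneg_of_nonneg_one hu1 hρ')) (rpow_nonneg ht'.1.le _)
    _ ≤ ∫ t in a..1, t ^ ((n : ℝ) - 1) * f (u t) := by
        have ha1 : a ≤ 1 := haρ.trans hρ.le
        refine intervalIntegral.integral_mono_interval le_rfl haρ hρ.le
          (ae_restrict_of_forall_mem measurableSet_Ioc fun t ht => ?_)
          ((hg.mono (Icc_subset_Ioc_iff ha1 |>.2 ⟨ha, le_rfl⟩)).intervalIntegrable_of_Icc ha1)
        have ht' : t ∈ Ioc 0 1 := ⟨ha.trans ht.1, ht.2⟩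
        exact mul_nonneg (rpow_nonneg ht'.1.le _) (hf0 _ (hu.nonneg_of_nonneg_one hu1 ht'))
    _ ≤ -radialFlux n p u' 1 :=
        hu.intervalIntegral_le_neg_radialFlux_one hp hf ⟨ha, haρ.trans_lt hρ⟩

theorem neg_radialFlux_one_le (hu : IsRadialSolution n p f u u') {ρ : ℝ} (hρ : ρ ∈ Ioo 0 1) :
    -radialFlux n p u' 1 ≤ (1 - ρ) * f (u ρ) + ((u ρ - u 1) / (1 - ρ)) ^ (p - 1) := by
  have hexp : (0 : ℝ) ≤ n - 1 := sub_nonneg.2 (by exact_mod_cast hn)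
  have hρ' : ρ ∈ Ioc 0 1 := Ioo_subset_Ioc_self hρ
  obtain ⟨ξ, hξ, hslope⟩ := exists_hasDerivAt_eq_slope u u' hρ.2
    (hu.continuousOn.mono (Icc_subset_Ioc_iff hρ.2.le |>.2 ⟨hρ.1, le_rfl⟩))
    (fun x hx => hu.hasDerivAt ⟨hρ.1.trans hx.1, hx.2⟩)
  have hξ' : ξ ∈ Ioo 0 1 := ⟨hρ.1.trans hξ.1, hξ.2⟩
  have hflux : -radialFlux n p u' ξ ≤ ((u ρ - u 1) / (1 - ρ)) ^ (p - 1) := by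
    have hneg : -u' ξ = (u ρ - u 1) / (1 - ρ) := by rw [hslope, ← neg_div, neg_sub]
    rw [neg_radialFlux_of_neg (hu.2.2.1 ξ hξ'), ← hneg]
    exact mul_le_of_le_one_left (rpow_nonneg (neg_nonneg.2 (hu.2.2.1 ξ hξ').le) _)
      (rpow_le_one hξ'.1.le hξ'.2.le hexp)
  have htail : ∫ t in ξ..1, t ^ ((n : ℝ) - 1) * f (u t) ≤ (1 - ρ) * f (u ρ) :=
    calc ∫ t in ξ..1, t ^ ((n : ℝ) - 1) * f (u t)
        ≤ ∫ _ in ξ..1, f (u ρ) := by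
          refine intervalIntegral.integral_mono_on hξ.2.le
            (((hu.continuousOn_weight_mul_comp hf).mono
              (Icc_subset_Ioc_iff hξ.2.le |>.2 ⟨hξ'.1, le_rfl⟩)).intervalIntegrable_of_Icc hξ.2.le)
            intervalIntegrable_const fun t ht => ?_
          have ht' : t ∈ Ioc 0 1 := ⟨hξ'.1.trans_le ht.1, ht.2⟩
          exact (mul_le_of_le_one_left (hf0 _ (hu.nonneg_of_nonneg_one hu1 ht'))
            (rpow_le_one ht'.1.le ht.2 hexp)).trans
            (hfmono (hu.nonneg_of_nonneg_one hu1 ht') (hu.nonneg_of_nonneg_one hu1 hρ')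
              (hu.antitoneOn hρ' ht' (hξ.1.le.trans ht.1)))
      _ = (1 - ξ) * f (u ρ) := by rw [intervalIntegral.integral_const, smul_eq_mul]
      _ ≤ (1 - ρ) * f (u ρ) :=
          mul_le_mul_of_nonneg_right (by linarith [hξ.1]) (hf0 _ (hu.nonneg_of_nonneg_one hu1 hρ'))
  have hftc := hu.intervalIntegral_eq_radialFlux_sub hp hf hξ'.1 hξ.2.le le_rfl
  linarith

end Estimates

theorem continuousOn_weight_mul_rpow_add (hu : IsRadialSolution n p f u u') (hp : 1 < p)
    (hf : Continuous f) :
    ContinuousOn (fun t : ℝ => t ^ ((n : ℝ) - 1) * (u t ^ (p - 1) + f (u t))) (Ioc 0 1) :=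
  hu.continuousOn_weight_mul_comp (F := fun x => x ^ (p - 1) + f x)
    ((continuous_id.rpow_const fun _ => Or.inr (by linarith)).add hf)

theorem intervalIntegral_weight_mul_rpow_add_le (hu : IsRadialSolution n p f u u') (hn : 1 ≤ n)
    (hp : 1 < p) (hf : Continuous f) (hf0 : ∀ t, 0 ≤ t → 0 ≤ f t) (hu1 : 0 ≤ u 1) {T : ℝ}
    (hT0 : 0 ≤ T) (hT : ∀ t, 0 ≤ t → t ^ (p - 1) ≤ f t + T) {c : ℝ} (hc : c ∈ Ioo 0 1) :
    ∫ t in c..1, t ^ ((n : ℝ) - 1) * (u t ^ (p - 1) + f (u t)) ≤ 2 * -radialFlux n p u' 1 + T := by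
  have hexp : (0 : ℝ) ≤ n - 1 := sub_nonneg.2 (by exact_mod_cast hn)
  have hsub : Icc c 1 ⊆ Ioc 0 1 := Icc_subset_Ioc_iff hc.2.le |>.2 ⟨hc.1, le_rfl⟩
  have hg : IntervalIntegrable (fun t => t ^ ((n : ℝ) - 1) * f (u t)) volume c 1 :=
    ((hu.continuousOn_weight_mul_comp hf).mono hsub).intervalIntegrable_of_Icc hc.2.le
  have hh := ((hu.continuousOn_weight_mul_rpow_add hp hf).mono hsub).intervalIntegrable_of_Icc
    (μ := volume) hc.2.le
  calc ∫ t in c..1, t ^ ((n : ℝ) - 1) * (u t ^ (p - 1) + f (u t))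
      ≤ ∫ t in c..1, (2 * (t ^ ((n : ℝ) - 1) * f (u t)) + T) := by
        refine intervalIntegral.integral_mono_on hc.2.le hh
          ((hg.const_mul 2).add intervalIntegrable_const) fun t ht => ?_
        have ht' : t ∈ Ioc 0 1 := hsub ht
        have hw0 : 0 ≤ t ^ ((n : ℝ) - 1) := rpow_nonneg ht'.1.le _
        have hw1 : t ^ ((n : ℝ) - 1) ≤ 1 := rpow_le_one ht'.1.le ht'.2 hexp
        have hfu := hf0 _ (hu.nonneg_of_nonneg_one hu1 ht')
        have hTu := hT _ (hu.nonneg_of_nonneg_one hu1 ht')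
        nlinarith [mul_le_mul_of_nonneg_left hTu hw0, mul_le_of_le_one_left hT0 hw1]
    _ = 2 * (∫ t in c..1, t ^ ((n : ℝ) - 1) * f (u t)) + (1 - c) * T := by
        rw [intervalIntegral.integral_add (hg.const_mul 2) intervalIntegrable_const,
          intervalIntegral.integral_const_mul, intervalIntegral.integral_const, smul_eq_mul]
    _ ≤ 2 * -radialFlux n p u' 1 + T := by
        nlinarith [hu.intervalIntegral_le_neg_radialFlux_one hp hf hc, hc.1]

end IsRadialSolution

theorem exists_neg_radialFlux_one_le {n : ℕ} {p : ℝ} {f : ℝ → ℝ} (hn : 1 ≤ n) (hp : 1 < p)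
    (hf : Continuous f) (hfmono : MonotoneOn f (Ici 0)) (hf0 : ∀ t, 0 ≤ t → 0 ≤ f t)
    (hsuper : Tendsto (fun t => f t / t ^ (p - 1)) atTop atTop) :
    ∃ Φ, 0 ≤ Φ ∧ ∀ u u', IsRadialSolution n p f u u' → u 1 = 0 → -radialFlux n p u' 1 ≤ Φ := by
  obtain ⟨δ, hδ, hδA⟩ : ∃ δ : ℝ, 0 < δ ∧ 8 * δ = (1 / 2) ^ ((n : ℝ) - 1) :=
    ⟨(1 / 2) ^ ((n : ℝ) - 1) / 8, by positivity, mul_div_cancel₀ _ (by norm_num)⟩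
  have hδ8 : 8 * δ ≤ 1 :=
    hδA ▸ rpow_le_one (by norm_num) (by norm_num) (sub_nonneg.2 (by exact_mod_cast hn))
  have hD : 0 < δ ^ (p - 1) := by positivity
  obtain ⟨T, hT0, hT⟩ := exists_mul_rpow_le_add_of_tendsto_div_rpow_atTop (by linarith) hf0 hsuper
    ((2 * δ * δ ^ (p - 1))⁻¹ + 1)
  refine ⟨2 * (T / δ ^ (p - 1)), by positivity, fun u u' hu hu1 => ?_⟩
  have hρ : 1 - δ ∈ Ioo 0 1 := ⟨by linarith, by linarith⟩
  have hq : 0 ≤ u (1 - δ) := hu.nonneg_of_nonneg_one hu1.ge (Ioo_subset_Ioc_self hρ)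
  have hlow := hu.mul_le_neg_radialFlux_one hn hp hf hfmono hf0 hu1.ge (a := 1 / 2) (by norm_num)
    (by linarith) hρ.2
  have hup := hu.neg_radialFlux_one_le hn hp hf hfmono hf0 hu1.ge hρ
  rw [hu1, sub_zero, sub_sub_cancel, div_rpow hq hδ.le] at hup
  rw [← hδA] at hlow
  generalize u (1 - δ) = q at hq hlow hup
  have hfq : 0 ≤ f q := hf0 q hq
  -- since `8δ ≤ 1`, the lower bound `(1/2 - δ) 8δ f(q)` is at least `3δ f(q)`
  have hR : 2 * δ * f q ≤ q ^ (p - 1) / δ ^ (p - 1) := by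
    nlinarith [mul_nonneg (mul_nonneg hδ.le (by linarith : 0 ≤ 1 - 8 * δ)) hfq]
  have hQ : q ^ (p - 1) ≤ T := by
    have hfq' : f q ≤ (2 * δ * δ ^ (p - 1))⁻¹ * q ^ (p - 1) := by
      rw [← div_eq_inv_mul, le_div_iff₀ (by positivity)]
      rw [le_div_iff₀ hD] at hR
      linarith
    linarith [hT q hq]
  calc -radialFlux n p u' 1 ≤ δ * f q + q ^ (p - 1) / δ ^ (p - 1) := hup
    _ ≤ 2 * (q ^ (p - 1) / δ ^ (p - 1)) := by
        have : 0 ≤ q ^ (p - 1) / δ ^ (p - 1) := by positivity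
        linarith
    _ ≤ 2 * (T / δ ^ (p - 1)) := by gcongr

theorem stmt18 (n : ℕ) (hn : 1 ≤ n) (p : ℝ) (hp : 1 < p)
    (f : ℝ → ℝ) (hf : ContDiff ℝ 1 f)
    (hfpos : ∀ t : ℝ, 0 ≤ t → 0 < f t) (hfmono : ∀ t : ℝ, 0 ≤ t → 0 ≤ deriv f t)
    (hsuper : Tendsto (fun t : ℝ => f t / t ^ (p - 1)) atTop atTop) :
    ∃ C : ℝ, 0 < C ∧ ∀ (u u' : ℝ → ℝ),
      IsRadialSolution n p f u u' →
      (∀ r ∈ Ioo (0:ℝ) 1, 0 < u r) → u 1 = 0 →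
      IntegrableOn
        (fun r : ℝ => r ^ ((n : ℝ) - 1) * ((u r) ^ (p - 1) + f (u r))) (Ioc (0:ℝ) 1) ∧
      ∫ r in Ioc (0:ℝ) 1, r ^ ((n : ℝ) - 1) * ((u r) ^ (p - 1) + f (u r)) ≤ C := by
  have hf0 : ∀ t, 0 ≤ t → 0 ≤ f t := fun t ht => (hfpos t ht).le
  have hfmono' : MonotoneOn f (Ici 0) :=
    monotoneOn_of_deriv_nonneg (convex_Ici 0) hf.continuous.continuousOn
      (hf.differentiable one_ne_zero).differentiableOn
      fun t ht => hfmono t (interior_subset (s := Ici 0) ht)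
  obtain ⟨Φ, hΦ0, hΦ⟩ := exists_neg_radialFlux_one_le hn hp hf.continuous hfmono' hf0 hsuper
  obtain ⟨T, hT0, hT⟩ :=
    exists_mul_rpow_le_add_of_tendsto_div_rpow_atTop (by linarith) hf0 hsuper 1
  simp only [one_mul] at hT
  refine ⟨2 * Φ + T + 1, by positivity, fun u u' hu _ hu1 => ?_⟩
  refine integrableOn_Ioc_and_setIntegral_le_of_forall_intervalIntegral_le one_pos
    (hu.continuousOn_weight_mul_rpow_add hp hf.continuous)
    (fun t ht => ?_) (fun c hc => ?_)
  · have hut := hu.nonneg_of_nonneg_one hu1.ge ht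
    exact mul_nonneg (rpow_nonneg ht.1.le _) (add_nonneg (rpow_nonneg hut _) (hf0 _ hut))
  · have := hu.intervalIntegral_weight_mul_rpow_add_le hn hp hf.continuous hf0 hu1.ge hT0 hT hc
    linarith [hΦ u u' hu hu1]
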